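/- arXiv:0710.2585 — 2 statements merged into one kernel-verified Lean document; each statement's English description precedes it below -/
import Mathlib

section
/- Let V be a vector space over a field F and let P₀, P₁, …, P_ℓ be mutually commuting linear endomorphisms of V. Suppose there exist linear endomorphisms Q₀, …, Q_ℓ of V, commuting with all the Pᵢ, such that id_V = Q₀ P^0 + ⋯ + Q_ℓ P^ℓ, where P^i denotes the composition of all P_j with j ≠ i. Set P = P₀ P₁ ⋯ P_ℓ. Then for any f ∈ V, the map u ↦ (P^0 u, …, P^ℓ u) is a bijection between the solution set {u ∈ V : P u = f} and the set of tuples (u₀, …, u_ℓ) with Pᵢ uᵢ = f for each i, with inverse (u₀,…,u_ℓ) ↦ ∑ᵢ Qᵢ uᵢ. -/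
open Finset

/-- **Gover–Šilhan Theorem 2.2 (solutions of the inhomogeneous problem).**
Let `P 0, …, P ℓ` be mutually commuting endomorphisms of a vector space `V` over a field `F`,
and suppose there are endomorphisms `Q i`, commuting with all the `P j`, such that
`id = ∑ i, Q i ∘ P^i` where `P^i = ∏_{j ≠ i} P j`.  Then for any `f ∈ V`, the map
`u ↦ (P^0 u, …, P^ℓ u)` is a bijection from `{u | (P 0 ∘ ⋯ ∘ P ℓ) u = f}` onto
`{(u 0, …, u ℓ) | ∀ i, P i (u i) = f}`, with inverse `(u i)ᵢ ↦ ∑ i, Q i (u i)`. -/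
theorem inhomogeneous_problem_decomposition
    {F V : Type*} [Field F] [AddCommGroup V] [Module F V] {ℓ : ℕ}
    (P Q : Fin (ℓ + 1) → Module.End F V)
    (hP : ∀ i j, Commute (P i) (P j))
    (hQP : ∀ i j, Commute (Q i) (P j))
    (Pi : Fin (ℓ + 1) → Module.End F V)
    (hPi : ∀ i, Pi i = (univ.erase i).noncommProd P
      (fun a _ b _ _ => hP a b))
    (hid : (∑ i, Q i * Pi i) = (1 : Module.End F V))
    (Ptot : Module.End F V)
    (hPtot : Ptot = univ.noncommProd P (fun a _ b _ _ => hP a b))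
    (f : V) :
    (∀ u : V, Ptot u = f → ∀ i, P i (Pi i u) = f) ∧
    (∀ u : V, Ptot u = f → (∑ i, Q i (Pi i u)) = u) ∧
    (∀ t : Fin (ℓ + 1) → V, (∀ i, P i (t i) = f) →
      Ptot (∑ i, Q i (t i)) = f ∧ ∀ i, Pi i (∑ j, Q j (t j)) = t i) := by
  -- P i * Pi i = Ptot
  have key1 : ∀ i, P i * Pi i = Ptot := by
    intro i
    rw [hPi, hPtot]
    exact Finset.mul_noncommProd_erase univ (mem_univ i) P _
  -- Pi i * P i = Ptot
  have key2 : ∀ i, Pi i * P i = Ptot := by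
    intro i
    rw [hPi, hPtot]
    exact Finset.noncommProd_erase_mul univ (mem_univ i) P _
  -- Q j commutes with Pi i and with Ptot
  have hQPi : ∀ j i, Commute (Q j) (Pi i) := by
    intro j i
    rw [hPi]
    exact Finset.noncommProd_commute _ _ _ _ fun x _ => hQP j x
  have hQPtot : ∀ j, Commute (Q j) Ptot := by
    intro j
    rw [hPtot]
    exact Finset.noncommProd_commute _ _ _ _ fun x _ => hQP j x
  -- for i ≠ j, Pi i = R i j * P j where R i j is the product over univ \ {i,j}
  have key3 : ∀ i j, i ≠ j → ∀ x y : V, P j x = P i y → Pi i x = Pi j y := by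
    intro i j hij x y hxy
    have hji : j ∈ univ.erase i := by simp [Ne.symm hij]
    have hij' : i ∈ univ.erase j := by simp [hij]
    have e1 : ((univ.erase i).erase j).noncommProd P
        (fun a ha b hb hab => hP a b) * P j = Pi i := by
      rw [hPi]
      exact Finset.noncommProd_erase_mul _ hji P _
    have e2 : ((univ.erase j).erase i).noncommProd P
        (fun a ha b hb hab => hP a b) * P i = Pi j := by
      rw [hPi]
      exact Finset.noncommProd_erase_mul _ hij' P _
    have hcc : ((univ.erase i).erase j) = ((univ.erase j).erase i) :=
      Finset.erase_right_comm
    rw [← e1, ← e2]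
    simp only [Module.End.mul_apply, hxy]
    congr 1
    exact Finset.noncommProd_congr hcc (fun _ _ => rfl) _
  refine ⟨?_, ?_, ?_⟩
  · intro u hu i
    have := congrFun (congrArg (fun g : Module.End F V => (g : V → V)) (key1 i)) u
    simpa [Module.End.mul_apply, hu] using this
  · intro u hu
    have := congrFun (congrArg (fun g : Module.End F V => (g : V → V)) hid) u
    simpa [Module.End.mul_apply, LinearMap.sum_apply] using this
  · intro t ht
    constructor
    · rw [map_sum]
      have : ∀ j, Ptot (Q j (t j)) = Q j (Pi j f) := by
        intro j
        have h1 : Ptot (Q j (t j)) = Q j (Ptot (t j)) := by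
          have := congrFun (congrArg (fun g : Module.End F V => (g : V → V))
            (hQPtot j).symm.eq) (t j)
          simpa [Module.End.mul_apply] using this
        have h2 : Ptot (t j) = Pi j (P j (t j)) := by
          have := congrFun (congrArg (fun g : Module.End F V => (g : V → V))
            (key2 j)) (t j)
          simpa [Module.End.mul_apply] using this.symm
        rw [h1, h2, ht j]
      rw [Finset.sum_congr rfl fun j _ => this j]
      have := congrFun (congrArg (fun g : Module.End F V => (g : V → V)) hid) f
      simpa [Module.End.mul_apply, LinearMap.sum_apply] using this
    · intro i
      have hti : t i = ∑ j, Q j (Pi j (t i)) := by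
        have := congrFun (congrArg (fun g : Module.End F V => (g : V → V)) hid) (t i)
        simpa [Module.End.mul_apply, LinearMap.sum_apply] using this.symm
      rw [map_sum]
      have : ∀ j, Pi i (Q j (t j)) = Q j (Pi j (t i)) := by
        intro j
        have hc : Pi i (Q j (t j)) = Q j (Pi i (t j)) := by
          have := congrFun (congrArg (fun g : Module.End F V => (g : V → V))
            (hQPi j i).symm.eq) (t j)
          simpa [Module.End.mul_apply] using this
        rw [hc]
        rcases eq_or_ne i j with rfl | hij
        · rfl
        · congr 1
          exact key3 i j hij (t j) (t i) (by rw [ht i, ht j])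
      rw [Finset.sum_congr rfl fun j _ => this j, ← hti]
end

section
/- Let V be a vector space over a field F, let P₀,…,P_ℓ be mutually commuting linear endomorphisms of V, and suppose there are endomorphisms Q₀,…,Q_ℓ commuting with all Pᵢ such that id_V = ∑ᵢ Qᵢ P^i with P^i = ∏_{j≠i} P_j. Then the range of P = P₀⋯P_ℓ equals the intersection of the ranges of the Pᵢ. -/
open Finset

/-- **Range of a commuting product (Gover–Šilhan).**
With mutually commuting endomorphisms `P 0, …, P ℓ` of a vector space `V` and operators
`Q i` commuting with all `P j` such that `id = ∑ i, Q i ∘ P^i` (`P^i = ∏_{j ≠ i} P j`),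
the range of `P = P 0 ∘ ⋯ ∘ P ℓ` is exactly the intersection of the ranges of the `P i`. -/
theorem range_of_product_eq_inf_of_ranges
    {F V : Type*} [Field F] [AddCommGroup V] [Module F V] {ℓ : ℕ}
    (P Q : Fin (ℓ + 1) → Module.End F V)
    (hP : ∀ i j, Commute (P i) (P j))
    (hQP : ∀ i j, Commute (Q i) (P j))
    (Pi : Fin (ℓ + 1) → Module.End F V)
    (hPi : ∀ i, Pi i = (univ.erase i).noncommProd P (fun a _ b _ _ => hP a b))
    (hid : (∑ i, Q i * Pi i) = (1 : Module.End F V))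
    (Ptot : Module.End F V)
    (hPtot : Ptot = univ.noncommProd P (fun a _ b _ _ => hP a b)) :
    LinearMap.range Ptot = ⨅ i, LinearMap.range (P i) := by
  have key : ∀ i, P i * Pi i = Ptot := by
    intro i
    rw [hPi, hPtot]
    exact Finset.mul_noncommProd_erase univ (mem_univ i) P _
  have key' : ∀ i, Pi i * P i = Ptot := by
    intro i
    rw [hPi, hPtot]
    exact Finset.noncommProd_erase_mul univ (mem_univ i) P _
  have hQtot : ∀ i, Commute (Q i) Ptot := by
    intro i
    rw [hPtot]
    exact (Finset.noncommProd_commute _ _ _ _ (fun j _ => hQP i j)).symm.symm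
  apply le_antisymm
  · refine le_iInf fun i => ?_
    rintro x ⟨v, rfl⟩
    exact ⟨Pi i v, by rw [← Module.End.mul_apply, key]⟩
  · rintro v hv
    rw [Submodule.mem_iInf] at hv
    choose w hw using fun i => hv i
    refine ⟨∑ i, Q i (w i), ?_⟩
    have : Ptot (∑ i, Q i (w i)) = ∑ i, (Q i * Pi i) v := by
      rw [map_sum]
      refine Finset.sum_congr rfl fun i _ => ?_
      calc Ptot (Q i (w i)) = Q i (Ptot (w i)) := by
            rw [← Module.End.mul_apply, ← (hQtot i).eq, Module.End.mul_apply]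
        _ = Q i (Pi i (P i (w i))) := by rw [← key' i]; rfl
        _ = (Q i * Pi i) v := by rw [hw i]; rfl
    rw [this, ← LinearMap.sum_apply, hid]; rfl
end
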